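/- arXiv:1707.02344 — 4 statements merged into one kernel-verified Lean document; each statement's English description precedes it below -/
import Mathlib

section
/- Let X be a set with a binary operation family x +_p y for p ∈ (0,1) satisfying idempotence (x +_p x = x), parametric commutativity (x +_p y = y +_{1-p} x), and parametric associativity ((x +_q y) +_p z = x +_{pq} (y +_{p(1-q)/(1-pq)} z) for pq ≠ 1). Then defining n-ary operations by the projection rule and the recursion ∑_{i=0}^n p_i x_i = (∑_{j=0}^{n-1} (p_j/(1-p_n)) x_j) +_{1-p_n} x_n (when p_n ≠ 1) makes X a convex algebra, i.e., the projection and barycenter axioms hold for all n-ary convex combinations. -/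
/-!
On the closed interval `[0, 1]` the laws of `x +_p y` hold without side conditions, the
endpoints being the projections.
Two reassociations, a commutation and idempotence give the exchange law
`(x +_a z) +_t (y +_b z) = (x +_u y) +_c z` with `c = t a + (1 - t) b`. Peeling off the last
point, it shows by induction on the arity that a binary combination of two `n`-ary combinations
of the same points is the `n`-ary combination with the mixed weights. The barycenter axiom then
follows by induction on the number of outer terms, each step being one such binary mixture;
projection is a direct induction, the last weight being either `0` or `1`.
-/

variable {A : Type*}

/-- The `n`-ary convex combination defined from binary combinations by
`∑_{i=0}^n p_i x_i = (∑_{j=0}^{n-1} (p_j/(1-p_n)) x_j) +_{1-p_n} x_n`.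
Here `comb p x y` denotes `x +_p y`, i.e. weight `p` on `x`. -/
noncomputable def naryComb (comb : ℝ → A → A → A) : (n : ℕ) → (Fin (n + 1) → ℝ) → (Fin (n + 1) → A) → A
  | 0, _, x => x 0
  | n + 1, p, x =>
      comb (1 - p (Fin.last (n + 1)))
        (naryComb comb n (fun j => p j.castSucc / (1 - p (Fin.last (n + 1))))
          (fun j => x j.castSucc))
        (x (Fin.last (n + 1)))

open Set

section stdSimplex

variable {𝕜 ι : Type*} [Fintype ι]

theorem eq_zero_of_mem_stdSimplex_of_eq_one [Ring 𝕜] [PartialOrder 𝕜]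
    [IsOrderedAddMonoid 𝕜] {p : ι → 𝕜} (hp : p ∈ stdSimplex 𝕜 ι) {j : ι} (hj : p j = 1)
    {i : ι} (hij : i ≠ j) :
    p i = 0 := by
  classical
  have hrest : ∑ k ∈ Finset.univ.erase j, p k = 0 := by
    have := Finset.add_sum_erase Finset.univ p (Finset.mem_univ j)
    rwa [hp.2, hj, add_eq_left] at this
  exact (Finset.sum_eq_zero_iff_of_nonneg fun k _ => hp.1 k).mp hrest i
    (Finset.mem_erase.mpr ⟨hij, Finset.mem_univ i⟩)

theorem sum_mul_mem_stdSimplex {κ : Type*} [Fintype κ] [Field 𝕜] [LinearOrder 𝕜]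
    [IsStrictOrderedRing 𝕜] {p : ι → 𝕜} (hp : p ∈ stdSimplex 𝕜 ι) {q : ι → κ → 𝕜}
    (hq : ∀ i, q i ∈ stdSimplex 𝕜 κ) :
    (fun j => ∑ i, p i * q i j) ∈ stdSimplex 𝕜 κ := by
  have := (convex_stdSimplex 𝕜 κ).sum_mem (fun i _ => hp.1 i) hp.2 fun i _ => hq i
  convert this using 1
  ext j
  simp only [Finset.sum_apply, Pi.smul_apply, smul_eq_mul]

end stdSimplex

section lastWeight

variable {n : ℕ} {p : Fin (n + 2) → ℝ}

theorem mem_stdSimplex_div_one_sub_last (hp : p ∈ stdSimplex ℝ (Fin (n + 2)))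
    (hL : p (Fin.last (n + 1)) ≠ 1) :
    (fun j : Fin (n + 1) => p j.castSucc / (1 - p (Fin.last (n + 1)))) ∈
      stdSimplex ℝ (Fin (n + 1)) := by
  have hsum := hp.2
  rw [Fin.sum_univ_castSucc] at hsum
  refine ⟨fun j => div_nonneg (hp.1 _) (sub_nonneg.2 (mem_Icc_of_mem_stdSimplex hp _).2), ?_⟩
  rw [← Finset.sum_div, div_eq_one_iff_eq (sub_ne_zero.2 hL.symm)]
  linarith

theorem one_sub_last_mul_div_one_sub_last (hp : p ∈ stdSimplex ℝ (Fin (n + 2)))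
    (j : Fin (n + 1)) :
    (1 - p (Fin.last (n + 1))) * (p j.castSucc / (1 - p (Fin.last (n + 1)))) = p j.castSucc := by
  rcases eq_or_ne (p (Fin.last (n + 1))) 1 with hL | hL
  · rw [eq_zero_of_mem_stdSimplex_of_eq_one hp hL (Fin.castSucc_lt_last j).ne, zero_div, mul_zero]
  · exact mul_div_cancel₀ _ (sub_ne_zero.2 hL.symm)

end lastWeight

theorem mul_one_sub_div_one_sub_mul_mem_Icc {p q : ℝ} (hp : p ∈ Icc (0 : ℝ) 1)
    (hq : q ∈ Icc (0 : ℝ) 1) :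
    p * (1 - q) / (1 - p * q) ∈ Icc (0 : ℝ) 1 := by
  obtain ⟨hp0, hp1⟩ := hp
  obtain ⟨hq0, hq1⟩ := hq
  have hpq : p * q ≤ 1 := mul_le_one₀ hp1 hq0 hq1
  refine ⟨div_nonneg (mul_nonneg hp0 (by linarith)) (by linarith),
    div_le_one_of_le₀ (by nlinarith) (by linarith)⟩

/-- Since `0 / 0 = 0`, associativity needs no side condition `p * q ≠ 1` here. -/
structure IsConvexOp (comb : ℝ → A → A → A) : Prop where
  one : ∀ x y, comb 1 x y = x
  idem : ∀ p ∈ Icc (0 : ℝ) 1, ∀ x, comb p x x = x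
  comm : ∀ p ∈ Icc (0 : ℝ) 1, ∀ x y, comb p x y = comb (1 - p) y x
  assoc : ∀ p ∈ Icc (0 : ℝ) 1, ∀ q ∈ Icc (0 : ℝ) 1, ∀ x y z,
    comb p (comb q x y) z = comb (p * q) x (comb (p * (1 - q) / (1 - p * q)) y z)

namespace IsConvexOp

variable {comb : ℝ → A → A → A}

theorem ofIoo
    (idem : ∀ p : ℝ, 0 < p → p < 1 → ∀ x, comb p x x = x)
    (comm : ∀ p : ℝ, 0 < p → p < 1 → ∀ x y, comb p x y = comb (1 - p) y x)
    (assoc : ∀ p q : ℝ, 0 < p → p < 1 → 0 < q → q < 1 → ∀ x y z,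
      comb p (comb q x y) z = comb (p * q) x (comb (p * (1 - q) / (1 - p * q)) y z))
    (comb_one : ∀ x y : A, comb 1 x y = x) (comb_zero : ∀ x y : A, comb 0 x y = y) :
    IsConvexOp comb where
  one := comb_one
  idem p hp x := by
    rcases hp.1.eq_or_lt with rfl | hp0
    · exact comb_zero x x
    rcases hp.2.eq_or_lt with rfl | hp1
    · exact comb_one x x
    exact idem p hp0 hp1 x
  comm p hp x y := by
    rcases hp.1.eq_or_lt with rfl | hp0
    · rw [comb_zero, sub_zero, comb_one]
    rcases hp.2.eq_or_lt with rfl | hp1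
    · rw [comb_one, sub_self, comb_zero]
    exact comm p hp0 hp1 x y
  assoc p hp q hq x y z := by
    rcases hp.1.eq_or_lt with rfl | hp0
    · simp only [zero_mul, zero_div, comb_zero]
    rcases hq.1.eq_or_lt with rfl | hq0
    · simp only [mul_zero, sub_zero, mul_one, div_one, comb_zero]
    rcases hq.2.eq_or_lt with rfl | hq1
    · simp only [mul_one, sub_self, mul_zero, zero_div, comb_zero, comb_one]
    rcases hp.2.eq_or_lt with rfl | hp1
    · rw [one_mul, one_mul, div_self (by linarith), comb_one, comb_one]
    exact assoc p q hp0 hp1 hq0 hq1 x y z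

variable (h : IsConvexOp comb)
include h

theorem zero (x y : A) : comb 0 x y = y := by
  rw [h.comm 0 ⟨le_rfl, zero_le_one⟩, sub_zero, h.one]

theorem comb_comb_comb {t a b : ℝ} (ht : t ∈ Icc (0 : ℝ) 1) (ha : a ∈ Icc (0 : ℝ) 1)
    (hb : b ∈ Icc (0 : ℝ) 1) (x y z : A) :
    comb t (comb a x z) (comb b y z) =
      comb (t * a + (1 - t) * b) (comb (t * a / (t * a + (1 - t) * b)) x y) z := by
  obtain ⟨ht0, ht1⟩ := ht
  obtain ⟨ha0, ha1⟩ := ha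
  obtain ⟨hb0, hb1⟩ := hb
  set c := t * a + (1 - t) * b with hc
  have hta : 0 ≤ t * a := mul_nonneg ht0 ha0
  have htb : 0 ≤ (1 - t) * b := mul_nonneg (by linarith) hb0
  have hcu : c * (t * a / c) = t * a := by
    rcases eq_or_ne c 0 with hc0 | hc0
    · rw [hc0, zero_mul]; linarith
    · exact mul_div_cancel₀ _ hc0
  have hcv : c * (1 - t * a / c) = (1 - t) * b := by rw [mul_sub, mul_one, hcu, hc]; ring
  have hc1 : c ≤ 1 := by nlinarith
  have hu : t * a / c ∈ Icc (0 : ℝ) 1 :=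
    ⟨div_nonneg hta (by linarith), div_le_one_of_le₀ (by linarith) (by linarith)⟩
  -- both sides reassociate to `x +_{t a} (y +_{(1 - t) b / (1 - t a)} z)`
  have hs := mul_one_sub_div_one_sub_mul_mem_Icc ⟨ht0, ht1⟩ ⟨ha0, ha1⟩
  have hs' : 1 - t * (1 - a) / (1 - t * a) ∈ Icc (0 : ℝ) 1 :=
    ⟨by linarith [hs.2], by linarith [hs.1]⟩
  rw [h.assoc t ⟨ht0, ht1⟩ a ⟨ha0, ha1⟩, h.comm _ hs, h.assoc _ hs' b ⟨hb0, hb1⟩,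
    h.idem _ (mul_one_sub_div_one_sub_mul_mem_Icc hs' ⟨hb0, hb1⟩),
    h.assoc c ⟨by linarith, hc1⟩ _ hu, hcu, hcv]
  rcases eq_or_ne (t * a) 1 with hta1 | hta1
  · rw [hta1, h.one, h.one]
  congr 2
  have : 1 - t * a ≠ 0 := sub_ne_zero.mpr (Ne.symm hta1)
  field_simp
  ring

theorem naryComb_eq_of_eq_one {n : ℕ} {p : Fin (n + 1) → ℝ}
    (hp : p ∈ stdSimplex ℝ (Fin (n + 1))) {j : Fin (n + 1)} (hj : p j = 1)
    (x : Fin (n + 1) → A) : naryComb comb n p x = x j := by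
  induction n with
  | zero => rw [Fin.fin_one_eq_zero j]; rfl
  | succ n ih =>
    rw [naryComb]
    rcases eq_or_ne j (Fin.last (n + 1)) with rfl | hjL
    · rw [hj, sub_self, h.zero]
    have hL : p (Fin.last (n + 1)) = 0 := eq_zero_of_mem_stdSimplex_of_eq_one hp hj hjL.symm
    obtain ⟨j, rfl⟩ := Fin.exists_castSucc_eq.mpr hjL
    have h1 : 1 - p (Fin.last (n + 1)) = 1 := by rw [hL, sub_zero]
    have hp' := mem_stdSimplex_div_one_sub_last hp (by rw [hL]; exact zero_ne_one)
    rw [h1] at hp'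
    rw [h1, h.one]
    exact ih hp' (by rw [hj, div_one]) _

theorem comb_naryComb_naryComb {m : ℕ} {t : ℝ} (ht : t ∈ Icc (0 : ℝ) 1)
    {r s : Fin (m + 1) → ℝ} (hr : r ∈ stdSimplex ℝ (Fin (m + 1)))
    (hs : s ∈ stdSimplex ℝ (Fin (m + 1)))
    (x : Fin (m + 1) → A) :
    comb t (naryComb comb m r x) (naryComb comb m s x) =
      naryComb comb m (fun j => t * r j + (1 - t) * s j) x := by
  induction m generalizing t with
  | zero => exact h.idem t ht (x 0)
  | succ m ih =>
    simp only [naryComb]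
    set rL := r (Fin.last (m + 1))
    set sL := s (Fin.last (m + 1))
    have hrL : rL ∈ Icc (0 : ℝ) 1 := mem_Icc_of_mem_stdSimplex hr _
    have hsL : sL ∈ Icc (0 : ℝ) 1 := mem_Icc_of_mem_stdSimplex hs _
    rw [h.comb_comb_comb ht ⟨by linarith [hrL.2], by linarith [hrL.1]⟩
      ⟨by linarith [hsL.2], by linarith [hsL.1]⟩,
      show 1 - (t * rL + (1 - t) * sL) = t * (1 - rL) + (1 - t) * (1 - sL) by ring]
    set c := t * (1 - rL) + (1 - t) * (1 - sL) with hc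
    rcases eq_or_ne c 0 with hc0 | hc0
    · rw [hc0, h.zero, h.zero]
    congr 1
    set u := t * (1 - rL) / c
    have hmix : ∀ j : Fin (m + 1), (t * r j.castSucc + (1 - t) * s j.castSucc) / c =
        u * (r j.castSucc / (1 - rL)) + (1 - u) * (s j.castSucc / (1 - sL)) := by
      intro j
      have h1u : 1 - u = (1 - t) * (1 - sL) / c := by
        rw [eq_div_iff hc0, sub_mul, one_mul, div_mul_cancel₀ _ hc0, hc]
        ring
      rw [h1u, div_mul_eq_mul_div, div_mul_eq_mul_div, ← add_div, mul_assoc, mul_assoc,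
        one_sub_last_mul_div_one_sub_last hr, one_sub_last_mul_div_one_sub_last hs]
    simp_rw [hmix]
    rcases eq_or_ne rL 1 with hr1 | hr1
    · have hu0 : u = 0 := by simp only [u, hr1, sub_self, mul_zero, zero_div]
      rw [hu0, h.zero]
      simp only [zero_mul, sub_zero, one_mul, zero_add]
    rcases eq_or_ne sL 1 with hs1 | hs1
    · have hu1 : u = 1 := (div_eq_one_iff_eq hc0).2 (by rw [hc, hs1]; ring)
      rw [hu1, h.one]
      simp only [one_mul, sub_self, zero_mul, add_zero]
    have htr : 0 ≤ t * (1 - rL) := mul_nonneg ht.1 (by linarith [hrL.2])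
    have hts : 0 ≤ (1 - t) * (1 - sL) := mul_nonneg (by linarith [ht.2]) (by linarith [hsL.2])
    exact ih ⟨div_nonneg htr (by linarith), div_le_one_of_le₀ (by linarith) (by linarith)⟩
      (mem_stdSimplex_div_one_sub_last hr hr1) (mem_stdSimplex_div_one_sub_last hs hs1) _

theorem naryComb_naryComb {n m : ℕ} {p : Fin (n + 1) → ℝ}
    (hp : p ∈ stdSimplex ℝ (Fin (n + 1))) {q : Fin (n + 1) → Fin (m + 1) → ℝ}
    (hq : ∀ i, q i ∈ stdSimplex ℝ (Fin (m + 1)))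
    (x : Fin (m + 1) → A) :
    naryComb comb n p (fun i => naryComb comb m (q i) x) =
      naryComb comb m (fun j => ∑ i, p i * q i j) x := by
  induction n with
  | zero =>
    have hp0 : p 0 = 1 := by simpa using hp.2
    have hw : (fun j => ∑ i, p i * q i j) = q 0 := funext fun j => by simp [hp0]
    rw [hw]
    rfl
  | succ n ih =>
    rcases eq_or_ne (p (Fin.last (n + 1))) 1 with hL | hL
    · rw [h.naryComb_eq_of_eq_one hp hL]
      congr 1
      funext j
      rw [Finset.sum_eq_single (Fin.last (n + 1))
        (fun i _ hi => by rw [eq_zero_of_mem_stdSimplex_of_eq_one hp hL hi, zero_mul])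
        (by simp), hL, one_mul]
    have hp' := mem_stdSimplex_div_one_sub_last hp hL
    have hpL := mem_Icc_of_mem_stdSimplex hp (Fin.last (n + 1))
    rw [naryComb, ih hp' fun i => hq _, h.comb_naryComb_naryComb
      ⟨sub_nonneg.2 hpL.2, by linarith [hpL.1]⟩ (sum_mul_mem_stdSimplex hp' fun i => hq _)
      (hq _)]
    congr 1
    funext j
    rw [Fin.sum_univ_castSucc (f := fun i => p i * q i j), Finset.mul_sum, sub_sub_cancel]
    congr 1
    refine Finset.sum_congr rfl fun i _ => ?_
    rw [← mul_assoc, one_sub_last_mul_div_one_sub_last hp]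

end IsConvexOp

/-- Stone's theorem: binary convex operations satisfying idempotence, parametric
commutativity and parametric associativity (together with the projection rule for
binary combinations) induce, via the recursion above, a convex algebra structure:
the projection and barycenter axioms hold for all n-ary convex combinations. -/
theorem stmt0 (comb : ℝ → A → A → A)
    (idem : ∀ p : ℝ, 0 < p → p < 1 → ∀ x, comb p x x = x)
    (comm : ∀ p : ℝ, 0 < p → p < 1 → ∀ x y, comb p x y = comb (1 - p) y x)
    (assoc : ∀ p q : ℝ, 0 < p → p < 1 → 0 < q → q < 1 → ∀ x y z,
      comb p (comb q x y) z = comb (p * q) x (comb (p * (1 - q) / (1 - p * q)) y z))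
    (comb_one : ∀ x y : A, comb 1 x y = x)
    (comb_zero : ∀ x y : A, comb 0 x y = y) :
    -- Projection axiom
    (∀ (n : ℕ) (p : Fin (n + 1) → ℝ) (x : Fin (n + 1) → A) (j : Fin (n + 1)),
      (∀ i, 0 ≤ p i) → (∑ i, p i) = 1 → p j = 1 → naryComb comb n p x = x j) ∧
    -- Barycenter axiom
    (∀ (n m : ℕ) (p : Fin (n + 1) → ℝ) (q : Fin (n + 1) → Fin (m + 1) → ℝ)
      (x : Fin (m + 1) → A),
      (∀ i, 0 ≤ p i) → (∑ i, p i) = 1 →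
      (∀ i j, 0 ≤ q i j) → (∀ i, (∑ j, q i j) = 1) →
      naryComb comb n p (fun i => naryComb comb m (q i) x) =
        naryComb comb m (fun j => ∑ i, p i * q i j) x) := by
  have h := IsConvexOp.ofIoo idem comm assoc comb_one comb_zero
  exact ⟨fun n p x j hp hs hj => h.naryComb_eq_of_eq_one ⟨hp, hs⟩ hj x,
    fun n m p q x hp hs hq hqs => h.naryComb_naryComb ⟨hp, hs⟩ (fun i => ⟨hq i, hqs i⟩) x⟩
end

section
/- Let A be a convex algebra and let A_c be the set of nonempty convex subsets of A, equipped with pointwise (Minkowski-style) binary operations pC + (1-p)D = { pc + (1-p)d : c ∈ C, d ∈ D }. Then A_c is itself a convex algebra: the pointwise operations satisfy idempotence (pC + (1-p)C = C for convex C), parametric commutativity, and parametric associativity. -/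
/-- A convex algebra presented by its binary convex combinations `comb p x y = p·x + (1-p)·y`
for `p ∈ (0,1)`, satisfying idempotence, parametric commutativity and parametric
associativity. -/
structure ConvexAlg (A : Type*) where
  comb : ℝ → A → A → A
  idem : ∀ p : ℝ, 0 < p → p < 1 → ∀ x, comb p x x = x
  comm : ∀ p : ℝ, 0 < p → p < 1 → ∀ x y, comb p x y = comb (1 - p) y x
  assoc : ∀ p q : ℝ, 0 < p → p < 1 → 0 < q → q < 1 → ∀ x y z,
    comb p (comb q x y) z = comb (p * q) x (comb (p * (1 - q) / (1 - p * q)) y z)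

variable {A B : Type*}

/-- Pointwise (Minkowski-style) convex combination of subsets:
`pC + (1-p)D = { p·c + (1-p)·d : c ∈ C, d ∈ D }`. -/
def setComb (𝒜 : ConvexAlg A) (p : ℝ) (C D : Set A) : Set A :=
  {z | ∃ c ∈ C, ∃ d ∈ D, z = 𝒜.comb p c d}

/-- A subset of a convex algebra is convex if it is closed under binary convex combinations. -/
def IsConvexSet (𝒜 : ConvexAlg A) (C : Set A) : Prop :=
  ∀ p : ℝ, 0 < p → p < 1 → ∀ x ∈ C, ∀ y ∈ C, 𝒜.comb p x y ∈ C

lemma pq_lt_one {p q : ℝ} (hp0 : 0 < p) (hp1 : p < 1) (hq0 : 0 < q) (hq1 : q < 1) :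
    p * q < 1 := by nlinarith

lemma frac_pos {p q : ℝ} (hp0 : 0 < p) (hp1 : p < 1) (hq0 : 0 < q) (hq1 : q < 1) :
    0 < p * (1 - q) / (1 - p * q) := by
  apply div_pos (by nlinarith) (by nlinarith [pq_lt_one hp0 hp1 hq0 hq1])

lemma frac_lt_one {p q : ℝ} (hp0 : 0 < p) (hp1 : p < 1) (hq0 : 0 < q) (hq1 : q < 1) :
    p * (1 - q) / (1 - p * q) < 1 := by
  rw [div_lt_one (by nlinarith [pq_lt_one hp0 hp1 hq0 hq1])]; nlinarith

/-- Exchange/swap lemma: `t·x + (1-t)(r·y + (1-r)z) = (1-t)r·y + ...` -/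
lemma swap_lemma (𝒜 : ConvexAlg A) {t r : ℝ} (ht0 : 0 < t) (ht1 : t < 1)
    (hr0 : 0 < r) (hr1 : r < 1) (x y z : A) :
    𝒜.comb t x (𝒜.comb r y z) =
      𝒜.comb ((1 - t) * r) y (𝒜.comb (t / (1 - (1 - t) * r)) x z) := by
  have h1t0 : (0:ℝ) < 1 - t := by linarith
  have h1t1 : (1:ℝ) - t < 1 := by linarith
  have hd : 0 < 1 - (1 - t) * r := by nlinarith
  have hf0 := frac_pos h1t0 h1t1 hr0 hr1
  have hf1 := frac_lt_one h1t0 h1t1 hr0 hr1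
  rw [𝒜.comm t ht0 ht1, 𝒜.assoc (1 - t) r h1t0 h1t1 hr0 hr1,
    𝒜.comm ((1 - t) * (1 - r) / (1 - (1 - t) * r)) hf0 hf1]
  congr 1
  field_simp
  ring

/-- Medial law: `r(pa+(1-p)b) + (1-r)(pc+(1-p)d) = p(ra+(1-r)c) + (1-p)(rb+(1-r)d)`. -/
lemma medial (𝒜 : ConvexAlg A) {r p : ℝ} (hr0 : 0 < r) (hr1 : r < 1)
    (hp0 : 0 < p) (hp1 : p < 1) (a b c d : A) :
    𝒜.comb r (𝒜.comb p a b) (𝒜.comb p c d) =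
      𝒜.comb p (𝒜.comb r a c) (𝒜.comb r b d) := by
  have hrp1 : r * p < 1 := pq_lt_one hr0 hr1 hp0 hp1
  have hpr1 : p * r < 1 := pq_lt_one hp0 hp1 hr0 hr1
  rw [𝒜.assoc r p hr0 hr1 hp0 hp1, 𝒜.assoc p r hp0 hp1 hr0 hr1]
  set t := p * (1 - r) / (1 - p * r) with hts
  have ht0 : 0 < t := frac_pos hp0 hp1 hr0 hr1
  have ht1 : t < 1 := frac_lt_one hp0 hp1 hr0 hr1
  rw [swap_lemma 𝒜 ht0 ht1 hr0 hr1]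
  have hd : (1:ℝ) - p * r ≠ 0 := by nlinarith
  have hd' : (1:ℝ) - r * p ≠ 0 := by nlinarith
  have h1r : (1:ℝ) - r ≠ 0 := by linarith
  have e1 : (1 - t) * r = r * (1 - p) / (1 - r * p) := by
    rw [hts]; field_simp; ring
  have e2 : t / (1 - (1 - t) * r) = p := by
    have hden : 1 - (1 - t) * r = (1 - r) / (1 - p * r) := by
      rw [hts]; field_simp; ring
    rw [hden, hts, div_div_div_eq, div_eq_iff (by
      intro h
      rcases mul_eq_zero.1 h with h | h
      · exact hd h
      · exact h1r (by nlinarith))]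
    ring
  rw [e2, e1, mul_comm r p]

/-- The convex powerset `A_c` of nonempty convex subsets of a convex algebra `A`,
with pointwise binary operations, is itself a convex algebra: the operations are
well-defined on nonempty convex subsets and satisfy idempotence, parametric
commutativity and parametric associativity. -/
theorem stmt3 (𝒜 : ConvexAlg A) :
    -- well-definedness: pointwise combinations of nonempty convex sets are nonempty convex
    (∀ p : ℝ, 0 < p → p < 1 → ∀ C D : Set A,
      C.Nonempty → IsConvexSet 𝒜 C → D.Nonempty → IsConvexSet 𝒜 D →
      (setComb 𝒜 p C D).Nonempty ∧ IsConvexSet 𝒜 (setComb 𝒜 p C D)) ∧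
    -- idempotence (for nonempty convex sets)
    (∀ p : ℝ, 0 < p → p < 1 → ∀ C : Set A,
      C.Nonempty → IsConvexSet 𝒜 C → setComb 𝒜 p C C = C) ∧
    -- parametric commutativity
    (∀ p : ℝ, 0 < p → p < 1 → ∀ C D : Set A,
      setComb 𝒜 p C D = setComb 𝒜 (1 - p) D C) ∧
    -- parametric associativity
    (∀ p q : ℝ, 0 < p → p < 1 → 0 < q → q < 1 → ∀ C D E : Set A,
      setComb 𝒜 p (setComb 𝒜 q C D) E =
        setComb 𝒜 (p * q) C (setComb 𝒜 (p * (1 - q) / (1 - p * q)) D E)) := by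
  refine ⟨?_, ?_, ?_, ?_⟩
  · rintro p hp0 hp1 C D ⟨c, hc⟩ hC ⟨d, hd⟩ hD
    refine ⟨⟨𝒜.comb p c d, c, hc, d, hd, rfl⟩, ?_⟩
    rintro r hr0 hr1 x ⟨c1, hc1, d1, hd1, rfl⟩ y ⟨c2, hc2, d2, hd2, rfl⟩
    exact ⟨𝒜.comb r c1 c2, hC r hr0 hr1 c1 hc1 c2 hc2,
      𝒜.comb r d1 d2, hD r hr0 hr1 d1 hd1 d2 hd2,
      medial 𝒜 hr0 hr1 hp0 hp1 c1 d1 c2 d2⟩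
  · rintro p hp0 hp1 C _ hC
    ext z
    constructor
    · rintro ⟨c, hc, d, hd, rfl⟩
      exact hC p hp0 hp1 c hc d hd
    · intro hz
      exact ⟨z, hz, z, hz, (𝒜.idem p hp0 hp1 z).symm⟩
  · intro p hp0 hp1 C D
    ext z
    constructor
    · rintro ⟨c, hc, d, hd, rfl⟩
      exact ⟨d, hd, c, hc, 𝒜.comm p hp0 hp1 c d⟩
    · rintro ⟨d, hd, c, hc, rfl⟩
      exact ⟨c, hc, d, hd, (𝒜.comm p hp0 hp1 c d).symm⟩
  · intro p q hp0 hp1 hq0 hq1 C D E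
    have hpq0 : 0 < p * q := mul_pos hp0 hq0
    have hpq1 : p * q < 1 := pq_lt_one hp0 hp1 hq0 hq1
    have hf0 : 0 < p * (1 - q) / (1 - p * q) := frac_pos hp0 hp1 hq0 hq1
    have hf1 : p * (1 - q) / (1 - p * q) < 1 := frac_lt_one hp0 hp1 hq0 hq1
    ext z
    constructor
    · rintro ⟨-, ⟨c, hc, d, hd, rfl⟩, e, he, rfl⟩
      exact ⟨c, hc, 𝒜.comb (p * (1 - q) / (1 - p * q)) d e,
        ⟨d, hd, e, he, rfl⟩, 𝒜.assoc p q hp0 hp1 hq0 hq1 c d e⟩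
    · rintro ⟨c, hc, -, ⟨d, hd, e, he, rfl⟩, rfl⟩
      exact ⟨𝒜.comb q c d, ⟨c, hc, d, hd, rfl⟩, e, he,
        (𝒜.assoc p q hp0 hp1 hq0 hq1 c d e).symm⟩
end

section
/- Let A be a convex algebra and let P_c(A) denote its convex powerset (nonempty convex subsets with pointwise operations). Then the union map μ : P_c(P_c(A)) → P_c(A), μ(𝒞) = ⋃ 𝒞, is well-defined (the union of a nonempty convex family of nonempty convex subsets is a nonempty convex subset) and is a convex algebra homomorphism. -/
variable {A B : Type*}

/-- Pointwise convex combination at the level of families of subsets, i.e. the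
convex-powerset operation on `P_c(P_c(A))`. -/
def famComb (𝒜 : ConvexAlg A) (p : ℝ) (𝒞 𝒟 : Set (Set A)) : Set (Set A) :=
  {Z | ∃ C ∈ 𝒞, ∃ D ∈ 𝒟, Z = setComb 𝒜 p C D}

/-- A family of subsets is convex (as a subset of the convex powerset) if it is
closed under the pointwise convex combinations of sets. -/
def IsConvexFam (𝒜 : ConvexAlg A) (𝒞 : Set (Set A)) : Prop :=
  ∀ p : ℝ, 0 < p → p < 1 → ∀ C ∈ 𝒞, ∀ D ∈ 𝒞, setComb 𝒜 p C D ∈ 𝒞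

/-- The union map `μ(𝒞) = ⋃ 𝒞 : P_c(P_c(A)) → P_c(A)` is well-defined (the union of
a nonempty convex family of nonempty convex subsets is a nonempty convex subset) and
is a convex algebra homomorphism. -/
theorem stmt10 (𝒜 : ConvexAlg A) :
    -- well-definedness
    (∀ 𝒞 : Set (Set A), 𝒞.Nonempty → (∀ C ∈ 𝒞, C.Nonempty ∧ IsConvexSet 𝒜 C) →
      IsConvexFam 𝒜 𝒞 → (⋃₀ 𝒞).Nonempty ∧ IsConvexSet 𝒜 (⋃₀ 𝒞)) ∧
    -- homomorphism property
    (∀ p : ℝ, 0 < p → p < 1 → ∀ 𝒞 𝒟 : Set (Set A),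
      𝒞.Nonempty → (∀ C ∈ 𝒞, C.Nonempty ∧ IsConvexSet 𝒜 C) → IsConvexFam 𝒜 𝒞 →
      𝒟.Nonempty → (∀ D ∈ 𝒟, D.Nonempty ∧ IsConvexSet 𝒜 D) → IsConvexFam 𝒜 𝒟 →
      ⋃₀ (famComb 𝒜 p 𝒞 𝒟) = setComb 𝒜 p (⋃₀ 𝒞) (⋃₀ 𝒟)) := by
  constructor
  · rintro 𝒞 ⟨C0, hC0⟩ hmem hfam
    constructor
    · obtain ⟨x, hx⟩ := (hmem C0 hC0).1
      exact ⟨x, C0, hC0, hx⟩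
    · rintro p hp0 hp1 x ⟨C, hC, hxC⟩ y ⟨D, hD, hyD⟩
      exact ⟨setComb 𝒜 p C D, hfam p hp0 hp1 C hC D hD, x, hxC, y, hyD, rfl⟩
  · rintro p hp0 hp1 𝒞 𝒟 _ _ _ _ _ _
    ext z
    constructor
    · rintro ⟨Z, ⟨C, hC, D, hD, rfl⟩, c, hc, d, hd, rfl⟩
      exact ⟨c, ⟨C, hC, hc⟩, d, ⟨D, hD, hd⟩, rfl⟩
    · rintro ⟨c, ⟨C, hC, hc⟩, d, ⟨D, hD, hd⟩, rfl⟩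
      exact ⟨setComb 𝒜 p C D, ⟨C, hC, D, hD, rfl⟩, c, hc, d, hd, rfl⟩
end

section
/- Given a natural transformation σ : F ⇒ G between Set endofunctors, the induced functor T on coalgebras, T(c : S → F S) = σ_S ∘ c, preserves behavioural equivalence; and if every component σ_S is injective, T also reflects behavioural equivalence (where two states are behaviourally equivalent iff they are identified by some coalgebra homomorphism). -/
universe u

/-- An endofunctor on `Sets`. -/
structure SetFunctor : Type (u + 1) where
  obj : Type u → Type u
  map : {X Y : Type u} → (X → Y) → obj X → obj Y
  map_id : ∀ X : Type u, map (id : X → X) = id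
  map_comp : ∀ {X Y Z : Type u} (f : X → Y) (g : Y → Z), map (g ∘ f) = map g ∘ map f

/-- `h` is a coalgebra homomorphism from `(S, c)` to `(T, d)`. -/
def IsCoalgHom (F : SetFunctor.{u}) {S T : Type u}
    (c : S → F.obj S) (d : T → F.obj T) (h : S → T) : Prop :=
  d ∘ h = F.map h ∘ c

/-- Two states of a coalgebra are behaviourally equivalent iff they are identified
by some coalgebra homomorphism. -/
def BehEq (F : SetFunctor.{u}) {S : Type u} (c : S → F.obj S) (s t : S) : Prop :=
  ∃ (T : Type u) (d : T → F.obj T) (h : S → T), IsCoalgHom F c d h ∧ h s = h t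

/-- Given a natural transformation `σ : F ⇒ G`, the induced functor on coalgebras
`c ↦ σ_S ∘ c` preserves behavioural equivalence; if every component of `σ` is
injective, it also reflects behavioural equivalence. -/
theorem stmt19 (F G : SetFunctor.{u}) (σ : ∀ X : Type u, F.obj X → G.obj X)
    (hnat : ∀ {X Y : Type u} (f : X → Y), σ Y ∘ F.map f = G.map f ∘ σ X) :
    (∀ (S : Type u) (c : S → F.obj S) (s t : S),
      BehEq F c s t → BehEq G (σ S ∘ c) s t) ∧
    ((∀ X : Type u, Function.Injective (σ X)) →
      ∀ (S : Type u) (c : S → F.obj S) (s t : S),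
        BehEq G (σ S ∘ c) s t → BehEq F c s t) := by
  constructor
  · rintro S c s t ⟨T, d, h, hhom, hst⟩
    refine ⟨T, σ T ∘ d, h, ?_, hst⟩
    unfold IsCoalgHom at *
    calc (σ T ∘ d) ∘ h = σ T ∘ (d ∘ h) := rfl
      _ = σ T ∘ (F.map h ∘ c) := by rw [hhom]
      _ = (σ T ∘ F.map h) ∘ c := rfl
      _ = (G.map h ∘ σ S) ∘ c := by rw [hnat]
      _ = G.map h ∘ (σ S ∘ c) := rfl
  · rintro hinj S c s t ⟨T, d, h, hhom, hst⟩
    -- quotient by the kernel of h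
    letI sd : Setoid S := ⟨fun x y => h x = h y,
      ⟨fun _ => rfl, fun e => e.symm, fun e₁ e₂ => e₁.trans e₂⟩⟩
    let E := Quotient sd
    let q : S → E := Quotient.mk sd
    let m : E → T := Quotient.lift h (fun _ _ e => e)
    have hmq : m ∘ q = h := rfl
    have hm_inj : Function.Injective m := by
      rintro ⟨x⟩ ⟨y⟩ e
      exact Quotient.sound (e : h x = h y)
    haveI : Nonempty E := ⟨q s⟩
    -- a retraction of m
    obtain ⟨r, hr⟩ : ∃ r : T → E, r ∘ m = id := by
      refine ⟨Function.invFun m, funext fun x => ?_⟩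
      exact Function.leftInverse_invFun hm_inj x
    have hGm_inj : Function.Injective (G.map m) := by
      intro a b e
      have : (G.map r ∘ G.map m) a = (G.map r ∘ G.map m) b := by
        simp only [Function.comp_apply, e]
      rwa [← G.map_comp, hr, G.map_id, id_eq, id_eq] at this
    -- well-definedness of the F-structure on the quotient
    have hcomp : G.map m ∘ G.map q = G.map h := by
      rw [← G.map_comp]; rfl
    have key : ∀ x y : S, h x = h y → F.map q (c x) = F.map q (c y) := by
      intro x y e
      apply hinj E
      have n := congrFun (hnat q) (c x)
      have n' := congrFun (hnat q) (c y)
      simp only [Function.comp_apply] at n n'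
      apply hGm_inj
      rw [n, n']
      have hx := congrFun hcomp (σ S (c x))
      have hy := congrFun hcomp (σ S (c y))
      simp only [Function.comp_apply] at hx hy
      rw [hx, hy]
      have dx := congrFun hhom x
      have dy := congrFun hhom y
      simp only [Function.comp_apply] at dx dy
      rw [← dx, ← dy, e]
    let e : E → F.obj E := Quotient.lift (fun x => F.map q (c x)) key
    refine ⟨E, e, q, ?_, Quotient.sound hst⟩
    unfold IsCoalgHom
    funext x
    rfl
end
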